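/- Let G be a finite commutative group and π a pairing on G. Let A = MonoidAlgebra ℂ G and let R̊ ∈ A ⊗[ℂ] A be the element R̊ = |G|⁻¹ • Σ_{g,h ∈ G} ((π g h)⁻¹ : ℂ) • (g ⊗ₜ h). Then the smallest ℂ-subspace B of A such that R̊ · R̊ ∈ B ⊗ A is the span of the squares: the ℂ-span of the set of all contractions (id ⊗ φ)(R̊ · R̊) ∈ A, as φ ranges over all ℂ-linear functionals A →ₗ[ℂ] ℂ, equals the ℂ-span of {single (g²) 1 | g ∈ G}. -/

import Mathlib

open scoped TensorProduct

noncomputable def Rcirc (G : Type*) [CommGroup G] [Fintype G] (π : G → G → ℂˣ) :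
    MonoidAlgebra ℂ G ⊗[ℂ] MonoidAlgebra ℂ G :=
  (Fintype.card G : ℂ)⁻¹ •
    ∑ g : G, ∑ h : G, ((π g h : ℂ))⁻¹ •
      (MonoidAlgebra.single g (1 : ℂ) ⊗ₜ[ℂ] MonoidAlgebra.single h (1 : ℂ))

/-!
For `g ∈ G` let `e g = |G|⁻¹ ∑ₕ π(g, h)⁻¹ h` be the idempotent of `ℂ[G]` attached to the
character `π(g, ·)`. Nondegeneracy makes these characters pairwise distinct, so orthogonality of
characters shows that the `e g` are orthogonal idempotents. As `R̊ = ∑_g g ⊗ e g`, this gives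
`R̊² = ∑_g g² ⊗ e g`, and the functional on `ℂ[G]` induced by the character `π(g₀, ·)` sends
`e g` to `δ_{g g₀}`, so it contracts `R̊²` to `g₀²`.
-/

open TensorProduct MonoidAlgebra

section Contraction

variable {K M N ι : Type*} [Field K] [AddCommGroup M] [Module K M] [AddCommGroup N] [Module K N]
  [Fintype ι]

theorem rid_map_id_sum_tmul (a : ι → M) (b : ι → N) (φ : N →ₗ[K] K) :
    TensorProduct.rid K M (TensorProduct.map LinearMap.id φ (∑ i, a i ⊗ₜ[K] b i)) =
      ∑ i, φ (b i) • a i := by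
  simp only [map_sum, map_tmul, LinearMap.id_coe, id_eq, rid_tmul]

theorem span_contractions_sum_tmul [DecidableEq ι] (a : ι → M) (b : ι → N)
    (f : ι → N →ₗ[K] K) (hf : ∀ i j, f i (b j) = if j = i then 1 else 0) :
    Submodule.span K {y | ∃ φ : N →ₗ[K] K,
        y = TensorProduct.rid K M (TensorProduct.map LinearMap.id φ (∑ i, a i ⊗ₜ[K] b i))} =
      Submodule.span K (Set.range a) := by
  apply le_antisymm
  · rw [Submodule.span_le]
    rintro _ ⟨φ, rfl⟩
    rw [rid_map_id_sum_tmul]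
    exact Submodule.sum_mem _ fun i _ => Submodule.smul_mem _ _ (Submodule.subset_span ⟨i, rfl⟩)
  · rw [Submodule.span_le]
    rintro _ ⟨i, rfl⟩
    refine Submodule.subset_span ⟨f i, ?_⟩
    rw [rid_map_id_sum_tmul]
    simp [hf]

end Contraction

namespace Pairing

variable {G : Type*} [CommGroup G] (π : G → G → ℂˣ)

def charRight (hmul_right : ∀ g h k : G, π g (h * k) = π g h * π g k) (g : G) : G →* ℂ :=
  (Units.coeHom ℂ).comp (MonoidHom.mk' (π g) (hmul_right g))

theorem charRight_apply (hmul_right : ∀ g h k : G, π g (h * k) = π g h * π g k) (g h : G) :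
    charRight π hmul_right g h = π g h :=
  rfl

section Left

variable (hmul_left : ∀ g h k : G, π (g * h) k = π g k * π h k)
include hmul_left

theorem one_left (k : G) : π 1 k = 1 :=
  map_one (MonoidHom.mk' (π · k) fun g h => hmul_left g h k)

theorem inv_left (g k : G) : π g⁻¹ k = (π g k)⁻¹ :=
  map_inv (MonoidHom.mk' (π · k) fun g h => hmul_left g h k) g

end Left

variable [Fintype G]

noncomputable def idempotent (g : G) : MonoidAlgebra ℂ G :=
  (Fintype.card G : ℂ)⁻¹ • ∑ h, (π g h : ℂ)⁻¹ • single h (1 : ℂ)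

theorem single_mul_idempotent (hmul_right : ∀ g h k : G, π g (h * k) = π g h * π g k)
    (k g : G) : single k 1 * idempotent π g = (π g k : ℂ) • idempotent π g := by
  simp only [idempotent, mul_smul_comm, smul_comm (π g k : ℂ), Finset.mul_sum,
    single_mul_single, one_mul, Finset.smul_sum, smul_smul]
  refine Fintype.sum_equiv (Equiv.mulLeft k) _ _ fun h => ?_
  rw [Equiv.coe_mulLeft, hmul_right, Units.val_mul]
  congr 1
  field_simp

variable [DecidableEq G]
  (hmul_left : ∀ g h k : G, π (g * h) k = π g k * π h k)
  (hmul_right : ∀ g h k : G, π g (h * k) = π g h * π g k)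
  (hnondeg : ∀ g : G, (∀ h : G, π g h = 1) → g = 1)
include hmul_left hmul_right hnondeg

theorem sum_eq_ite (g : G) :
    ∑ h, (π g h : ℂ) = if g = 1 then (Fintype.card G : ℂ) else 0 := by
  split_ifs with hg
  · simp [hg, one_left π hmul_left]
  · rw [← sum_hom_units_eq_zero (charRight π hmul_right g)]
    · rfl
    · contrapose! hg
      exact hnondeg g fun k => Units.ext (DFunLike.congr_fun hg k)

theorem sum_inv_mul (g g' : G) :
    ∑ h, (π g h : ℂ)⁻¹ * π g' h = if g = g' then (Fintype.card G : ℂ) else 0 := by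
  have := sum_eq_ite π hmul_left hmul_right hnondeg (g⁻¹ * g')
  simp only [hmul_left, inv_left π hmul_left, Units.val_mul, Units.val_inv_eq_inv_val] at this
  simpa only [inv_mul_eq_one] using this

theorem idempotent_mul_idempotent (g g' : G) :
    idempotent π g * idempotent π g' = if g = g' then idempotent π g' else 0 := by
  conv_lhs => rw [idempotent]
  simp only [smul_mul_assoc, Finset.sum_mul, single_mul_idempotent π hmul_right, smul_smul,
    ← Finset.sum_smul, sum_inv_mul π hmul_left hmul_right hnondeg]
  split_ifs <;> simp [Fintype.card_ne_zero]

theorem lift_charRight_idempotent (g₀ g : G) :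
    lift ℂ ℂ G (charRight π hmul_right g₀) (idempotent π g) = if g = g₀ then 1 else 0 := by
  simp only [idempotent, map_smul, map_sum, lift_single, charRight_apply, smul_eq_mul, one_mul]
  rw [sum_inv_mul π hmul_left hmul_right hnondeg]
  split_ifs <;> simp [Fintype.card_ne_zero]

end Pairing

section Rcirc

variable {G : Type*} [CommGroup G] [Fintype G] (π : G → G → ℂˣ)

theorem Rcirc_eq_sum_tmul_idempotent :
    Rcirc G π = ∑ g, single g 1 ⊗ₜ[ℂ] Pairing.idempotent π g := by
  simp only [Rcirc, Pairing.idempotent, tmul_smul, tmul_sum, Finset.smul_sum]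

theorem Rcirc_mul_self (hmul_left : ∀ g h k : G, π (g * h) k = π g k * π h k)
    (hmul_right : ∀ g h k : G, π g (h * k) = π g h * π g k)
    (hnondeg : ∀ g : G, (∀ h : G, π g h = 1) → g = 1) :
    Rcirc G π * Rcirc G π = ∑ g, single (g ^ 2) 1 ⊗ₜ[ℂ] Pairing.idempotent π g := by
  classical
  simp only [Rcirc_eq_sum_tmul_idempotent, Finset.sum_mul_sum,
    Algebra.TensorProduct.tmul_mul_tmul, single_mul_single, one_mul,
    Pairing.idempotent_mul_idempotent π hmul_left hmul_right hnondeg, tmul_ite,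
    Finset.sum_ite_eq, Finset.mem_univ, if_true, sq]

end Rcirc

theorem stmt_4_general {G : Type*} [CommGroup G] [Fintype G]
    (π : G → G → ℂˣ)
    (hmul_left : ∀ g h k : G, π (g * h) k = π g k * π h k)
    (hmul_right : ∀ g h k : G, π g (h * k) = π g h * π g k)
    (hnondeg : ∀ g : G, (∀ h : G, π g h = 1) → g = 1) :
    Submodule.span ℂ
        { y : MonoidAlgebra ℂ G | ∃ φ : MonoidAlgebra ℂ G →ₗ[ℂ] ℂ,
            y = TensorProduct.rid ℂ (MonoidAlgebra ℂ G)
              (TensorProduct.map LinearMap.id φ (Rcirc G π * Rcirc G π)) } =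
      Submodule.span ℂ (Set.range fun g : G => MonoidAlgebra.single (g ^ 2) (1 : ℂ)) := by
  classical
  rw [Rcirc_mul_self π hmul_left hmul_right hnondeg]
  exact span_contractions_sum_tmul _ _
    (fun g₀ => (lift ℂ ℂ G (Pairing.charRight π hmul_right g₀)).toLinearMap)
    (Pairing.lift_charRight_idempotent π hmul_left hmul_right hnondeg)

/-- The smallest subspace `B ⊆ ℂ[G]` with `R̊·R̊ ∈ B ⊗ ℂ[G]` — the span of the
contractions `(id ⊗ φ)(R̊·R̊)` over all linear functionals `φ` — is the span of the
squares `{g² : g ∈ G}`. -/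
theorem stmt_4 {G : Type*} [CommGroup G] [Fintype G]
    (π : G → G → ℂˣ)
    (hmul_left : ∀ g h k : G, π (g * h) k = π g k * π h k)
    (hmul_right : ∀ g h k : G, π g (h * k) = π g h * π g k)
    (hsymm : ∀ g h : G, π g h = π h g)
    (hnondeg : ∀ g : G, (∀ h : G, π g h = 1) → g = 1) :
    Submodule.span ℂ
        { y : MonoidAlgebra ℂ G | ∃ φ : MonoidAlgebra ℂ G →ₗ[ℂ] ℂ,
            y = TensorProduct.rid ℂ (MonoidAlgebra ℂ G)
              (TensorProduct.map LinearMap.id φ (Rcirc G π * Rcirc G π)) } =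
      Submodule.span ℂ (Set.range fun g : G => MonoidAlgebra.single (g ^ 2) (1 : ℂ)) :=
  stmt_4_general π hmul_left hmul_right hnondeg
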